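/- In a G polyadic Heyting algebra, if u ≠ j, c_u p = p (i.e. u ∉ Δp), then c_u s_{[j|u]} p = c_j p. -/
import Mathlib


/-- The replacement `[i|j]` sending `i` to `j` and fixing everything else. -/
def replace {α : Type*} [DecidableEq α] (i j : α) : α → α :=
  fun x => if x = i then j else x

/-- A `G` polyadic Heyting algebra: a Heyting algebra with substitutions `s τ`
(for `τ` in a semigroup `G ⊆ αα` containing the identity and all replacements),
finite existential cylindrifications `c J` and universal quantifiers `q J`. -/
structure GPHA (α : Type*) (A : Type*) [DecidableEq α] [HeytingAlgebra A] where
  G : Set (α → α)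
  id_mem : id ∈ G
  comp_mem : ∀ σ τ : α → α, σ ∈ G → τ ∈ G → σ ∘ τ ∈ G
  replace_mem : ∀ i j : α, replace i j ∈ G
  s : (α → α) → A → A
  c : Finset α → A → A
  q : Finset α → A → A
  -- each `s τ` (for `τ ∈ G`) is a Heyting endomorphism
  s_bot : ∀ τ ∈ G, s τ ⊥ = ⊥
  s_inf : ∀ τ ∈ G, ∀ p p' : A, s τ (p ⊓ p') = s τ p ⊓ s τ p'
  s_sup : ∀ τ ∈ G, ∀ p p' : A, s τ (p ⊔ p') = s τ p ⊔ s τ p'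
  s_himp : ∀ τ ∈ G, ∀ p p' : A, s τ (p ⇨ p') = s τ p ⇨ s τ p'
  s_id : ∀ p : A, s id p = p
  s_comp : ∀ σ ∈ G, ∀ τ ∈ G, ∀ p : A, s (σ ∘ τ) p = s σ (s τ p)
  -- each `c J` is an existential quantifier
  c_bot : ∀ J, c J ⊥ = ⊥
  le_c : ∀ J (p : A), p ≤ c J p
  c_inf_c : ∀ J (p p' : A), c J (p ⊓ c J p') = c J p ⊓ c J p'
  c_himp_c : ∀ J (p p' : A), c J (c J p ⇨ c J p') = c J p ⇨ c J p'
  c_sup_c : ∀ J (p p' : A), c J (c J p ⊔ c J p') = c J p ⊔ c J p'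
  c_idem : ∀ J (p : A), c J (c J p) = c J p
  -- each `q J` is a universal quantifier
  q_top : ∀ J, q J ⊤ = ⊤
  q_le : ∀ J (p : A), q J p ≤ p
  q_himp : ∀ J (p p' : A), q J (p ⇨ p') ≤ q J p ⇨ q J p'
  q_idem : ∀ J (p : A), q J (q J p) = q J p
  -- polyadic axioms
  c_empty : ∀ p : A, c ∅ p = p
  q_empty : ∀ p : A, q ∅ p = p
  c_union : ∀ J J' (p : A), c (J ∪ J') p = c J (c J' p)
  q_union : ∀ J J' (p : A), q (J ∪ J') p = q J (q J' p)
  c_q : ∀ J (p : A), c J (q J p) = q J p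
  q_c : ∀ J (p : A), q J (c J p) = c J p
  s_c_agree : ∀ σ ∈ G, ∀ τ ∈ G, ∀ (J : Finset α) (p : A),
      (∀ i ∉ J, σ i = τ i) → s σ (c J p) = s τ (c J p)
  s_q_agree : ∀ σ ∈ G, ∀ τ ∈ G, ∀ (J : Finset α) (p : A),
      (∀ i ∉ J, σ i = τ i) → s σ (q J p) = s τ (q J p)
  c_s : ∀ σ ∈ G, ∀ (J K : Finset α) (p : A),
      (∀ i, i ∈ K ↔ σ i ∈ J) → Set.InjOn σ ↑K → c J (s σ p) = s σ (c K p)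
  q_s : ∀ σ ∈ G, ∀ (J K : Finset α) (p : A),
      (∀ i, i ∈ K ↔ σ i ∈ J) → Set.InjOn σ ↑K → q J (s σ p) = s σ (q K p)

lemma GPHA.s_mono {α A : Type*} [DecidableEq α] [HeytingAlgebra A]
    (P : GPHA α A) {τ : α → α} (hτ : τ ∈ P.G) {p q : A} (h : p ≤ q) :
    P.s τ p ≤ P.s τ q := by
  have h1 : p ⊓ q = p := inf_eq_left.mpr h
  have h2 : P.s τ p ⊓ P.s τ q = P.s τ p := by rw [← P.s_inf τ hτ, h1]
  exact inf_eq_left.mp h2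

lemma GPHA.c_mono {α A : Type*} [DecidableEq α] [HeytingAlgebra A]
    (P : GPHA α A) (J : Finset α) {p q : A} (h : p ≤ q) :
    P.c J p ≤ P.c J q := by
  have h1 : p ⊓ P.c J q = p := inf_eq_left.mpr (h.trans (P.le_c J q))
  calc P.c J p = P.c J (p ⊓ P.c J q) := by rw [h1]
    _ = P.c J p ⊓ P.c J q := P.c_inf_c J p q
    _ ≤ P.c J q := inf_le_right

theorem c_fresh_substitution {α A : Type*} [DecidableEq α]
    [HeytingAlgebra A] (P : GPHA α A) {u j : α} (huj : u ≠ j) {p : A}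
    (hu : P.c {u} p = p) :
    P.c {u} (P.s (replace j u) p) = P.c {j} p := by
  have hju : replace j u ∈ P.G := P.replace_mem j u
  have huj' : replace u j ∈ P.G := P.replace_mem u j
  have hid : id ∈ P.G := P.id_mem
  -- c {j} fixes anything of the form s (replace j u) x
  have hfix : ∀ x : A, P.c {j} (P.s (replace j u) x) = P.s (replace j u) x := by
    intro x
    have h := P.c_s (replace j u) hju {j} ∅ x
      (by
        intro i
        simp only [Finset.notMem_empty, false_iff, Finset.mem_singleton, replace]
        split <;> simp_all [Ne.symm huj])
      (by simp [Set.InjOn])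
    rw [h, P.c_empty]
  -- s (replace u j) p = p
  have hsp : P.s (replace u j) p = p := by
    have h := P.s_c_agree (replace u j) huj' id hid {u} p
      (by intro i hi; simp [replace, Finset.mem_singleton] at hi ⊢; simp [hi])
    rw [hu] at h
    rw [h, P.s_id]
  -- composition fact
  have hcomp : replace u j ∘ replace j u = replace u j := by
    funext x
    simp only [Function.comp, replace]
    split <;> split <;> simp_all <;> simp [huj, Ne.symm huj]
  have hcomp' : P.s (replace u j) (P.s (replace j u) p) = p := by
    rw [← P.s_comp _ huj' _ hju, hcomp, hsp]
  -- commuting the two cylindrifications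
  have hcc : ∀ x : A, P.c {u} (P.c {j} x) = P.c {j} (P.c {u} x) := by
    intro x
    rw [← P.c_union, ← P.c_union, Finset.union_comm]
  apply le_antisymm
  · -- s (replace j u) p ≤ c {j} p
    have h1 : P.s (replace j u) p ≤ P.s (replace j u) (P.c {j} p) :=
      P.s_mono hju (P.le_c {j} p)
    have h2 : P.s (replace j u) (P.c {j} p) = P.c {j} p := by
      have h := P.s_c_agree (replace j u) hju id hid {j} p
        (by intro i hi; simp [replace, Finset.mem_singleton] at hi ⊢; simp [hi])
      rw [h, P.s_id]
    have h3 : P.s (replace j u) p ≤ P.c {j} p := h2 ▸ h1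
    calc P.c {u} (P.s (replace j u) p) ≤ P.c {u} (P.c {j} p) := P.c_mono _ h3
      _ = P.c {j} (P.c {u} p) := hcc p
      _ = P.c {j} p := by rw [hu]
  · -- p ≤ c {u} (s (replace j u) p)
    have h1 : P.s (replace u j) (P.s (replace j u) p)
        ≤ P.s (replace u j) (P.c {u} (P.s (replace j u) p)) :=
      P.s_mono huj' (P.le_c {u} _)
    have h2 : P.s (replace u j) (P.c {u} (P.s (replace j u) p))
        = P.c {u} (P.s (replace j u) p) := by
      have h := P.s_c_agree (replace u j) huj' id hid {u} (P.s (replace j u) p)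
        (by intro i hi; simp [replace, Finset.mem_singleton] at hi ⊢; simp [hi])
      rw [h, P.s_id]
    have h3 : p ≤ P.c {u} (P.s (replace j u) p) := by
      rw [hcomp'] at h1; rw [h2] at h1; exact h1
    calc P.c {j} p ≤ P.c {j} (P.c {u} (P.s (replace j u) p)) := P.c_mono _ h3
      _ = P.c {u} (P.c {j} (P.s (replace j u) p)) := (hcc _).symm
      _ = P.c {u} (P.s (replace j u) p) := by rw [hfix]
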